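/- There is no function u : {0, 1, √2, ..., √n} → ℝ such that ‖φ_A(x) − φ_A(x')‖₂² = u(√(h(x,x'))) for all x, x', where φ_A is the HED embedding for an arbitrary dictionary A; in particular, with a single anchor a = (1,1,1) in {1,2,3}³, the pairs (x,x') = ((1,1,1),(1,1,2)) and ((1,1,2),(1,1,3)) both have Hamming distance 1 but HED embedding distances 1 and 0 respectively. Hence the BODi (HED) kernel is not a Hamming kernel. -/

import Mathlib

/-- Hamming distance on `（Fin 3 → Fin 3)`, three categorical variables with 3 categories. -/
def ham14 (x y : Fin 3 → Fin 3) : ℕ := (Finset.univ.filter (fun i => x i ≠ y i)).card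

/-- The Matérn-5/2 profile used by BODi, applied to the squared HED-embedding distance. -/
noncomputable def matern52 (ℓ d : ℝ) : ℝ :=
  (1 + Real.sqrt 5 * d / ℓ + 5 * d ^ 2 / (3 * ℓ ^ 2)) * Real.exp (-(Real.sqrt 5) * d / ℓ)

lemma one_add_add_sq_lt_exp {t : ℝ} (ht : 0 < t) : 1 + t + t ^ 2 / 3 < Real.exp t := by
  have h3 : (1 + t / 3) < Real.exp (t / 3) := by
    have := Real.add_one_lt_exp (x := t / 3) (by positivity)
    linarith
  have h0 : (0:ℝ) ≤ 1 + t / 3 := by linarith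
  have hcube : (1 + t / 3) ^ 3 < (Real.exp (t / 3)) ^ 3 := by
    exact pow_lt_pow_left₀ h3 h0 (by norm_num)
  have : (Real.exp (t / 3)) ^ 3 = Real.exp t := by
    rw [← Real.exp_nat_mul]; congr 1; push_cast; ring
  nlinarith [pow_pos ht 3]

lemma matern52_one_lt (ℓ : ℝ) (hℓ : 0 < ℓ) : matern52 ℓ 1 < matern52 ℓ 0 := by
  have h0 : matern52 ℓ 0 = 1 := by simp [matern52]
  rw [h0]
  unfold matern52
  have h5 : 0 < Real.sqrt 5 := Real.sqrt_pos.mpr (by norm_num)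
  set t := Real.sqrt 5 / ℓ with htdef
  have ht : 0 < t := by positivity
  have hts : t ^ 2 = 5 / ℓ ^ 2 := by
    rw [htdef, div_pow, Real.sq_sqrt (by norm_num : (5:ℝ) ≥ 0)]
  have key := one_add_add_sq_lt_exp ht
  have hexp : Real.exp (-(Real.sqrt 5) * 1 / ℓ) = (Real.exp t)⁻¹ := by
    rw [← Real.exp_neg]; ring_nf; rw [htdef, div_eq_mul_inv]
  have hpos : 0 < Real.exp t := Real.exp_pos t
  have lhs_eq : (1 + Real.sqrt 5 * 1 / ℓ + 5 * 1 ^ 2 / (3 * ℓ ^ 2)) = 1 + t + t ^ 2 / 3 := by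
    rw [hts, htdef]; field_simp
  rw [hexp, lhs_eq]
  rw [mul_inv_lt_iff₀ hpos]; linarith

/-- with the single anchor `a = (1,1,1)` in `{1,2,3}³` (here `fun _ => 0`), the
squared HED-embedding distance `(h(a,x) − h(a,x'))²` is not a function of `√h(x,x')`, so no
`u` as in the claim exists; consequently the BODi (HED) kernel is not a Hamming kernel. -/
theorem stmt_14 (ℓ : ℝ) (hℓ : 0 < ℓ) (a : Fin 3 → Fin 3) (ha : a = fun _ => 0) :
    (¬ ∃ u : ℝ → ℝ, ∀ x x' : Fin 3 → Fin 3,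
      ((ham14 a x : ℝ) - (ham14 a x' : ℝ)) ^ 2 = u (Real.sqrt (ham14 x x'))) ∧
    (¬ ∃ F : ℝ → ℝ, ∀ x x' : Fin 3 → Fin 3,
      matern52 ℓ (((ham14 a x : ℝ) - (ham14 a x' : ℝ)) ^ 2) = F (Real.sqrt (ham14 x x'))) := by
  subst ha
  have e1 : ham14 (fun _ => 0) (fun _ => 0) = 0 := by decide
  have e2 : ham14 (fun _ => 0) ![0, 0, 1] = 1 := by decide
  have e3 : ham14 (fun _ => 0) ![0, 0, 2] = 1 := by decide
  have e4 : ham14 (fun _ => 0) ![0, 0, 1] = ham14 ![0, 0, 1] ![0, 0, 2] := by decide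
  have e5 : ham14 ![0, 0, 1] ![0, 0, 2] = 1 := by decide
  constructor
  · rintro ⟨u, hu⟩
    have h1 := hu (fun _ => 0) ![0, 0, 1]
    have h2 := hu ![0, 0, 1] ![0, 0, 2]
    rw [e1, e2] at h1
    rw [e2, e3, e5] at h2
    norm_num at h1 h2
    linarith
  · rintro ⟨F, hF⟩
    have h1 := hF (fun _ => 0) ![0, 0, 1]
    have h2 := hF ![0, 0, 1] ![0, 0, 2]
    rw [e1, e2] at h1
    rw [e2, e3, e5] at h2
    norm_num at h1 h2
    have := matern52_one_lt ℓ hℓ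
    linarith
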